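/- arXiv:1507.08327 — 2 statements merged into one kernel-verified Lean document; each statement's English description precedes it below -/
import Mathlib

section
/- Fournier's fully-sorted Minkowski inequality: let (X₁,μ₁),…,(Xₙ,μₙ) be σ-finite measure spaces with product (X,μ), let p₁,…,pₙ ∈ (0,∞], and let P be the double n-tuple pairing pⱼ with xⱼ. Let σ and ρ be permutations of {1,…,n} with p_{σ(1)} ≥ p_{σ(2)} ≥ ⋯ ≥ p_{σ(n)} and p_{ρ(1)} ≤ p_{ρ(2)} ≤ ⋯ ≤ p_{ρ(n)}. Then for every nonnegative measurable function f on X, ‖f‖_{P·ρ} ≤ ‖f‖_P ≤ ‖f‖_{P·σ}. In words: among all orderings of the iterated norms, taking the exponents in decreasing order of integration (largest exponent innermost) gives the largest mixed norm, and taking them in increasing order gives the smallest. -/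
open MeasureTheory
open scoped ENNReal

/-- Take the `L^q` norm of `f` in the single variable `x_j`, with the convention that
an exponent `∞` is interpreted as the essential supremum in that variable. -/
noncomputable def normIn {n : ℕ} {X : Fin n → Type*} [∀ j, MeasurableSpace (X j)]
    (μ : ∀ j, Measure (X j)) (j : Fin n) (q : ℝ≥0∞)
    (f : (∀ k, X k) → ℝ≥0∞) : (∀ k, X k) → ℝ≥0∞ :=
  fun x =>
    if q = ∞ then essSup (fun t => f (Function.update x j t)) (μ j)
    else (∫⁻ t, f (Function.update x j t) ^ q.toReal ∂(μ j)) ^ (1 / q.toReal)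

/-- The mixed norm of `f` determined by a double `n`-tuple, given as the list of
(variable, exponent) pairs in the order of processing. -/
noncomputable def mixedNorm {n : ℕ} {X : Fin n → Type*} [∀ j, MeasurableSpace (X j)]
    (μ : ∀ j, Measure (X j)) (P : List (Fin n × ℝ≥0∞))
    (f : (∀ k, X k) → ℝ≥0∞) : ℝ≥0∞ :=
  ⨆ x, (P.foldl (fun g jq => normIn μ jq.1 jq.2 g) f) x

/-!
Every mixed norm is an iterated one-variable norm, and the basic step is the exchange inequality
`‖‖F‖_{L^q_a}‖_{L^{q'}_b} ≤ ‖‖F‖_{L^{q'}_b}‖_{L^q_a}` for `0 < q ≤ q'`: swapping two adjacent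
variables so that the larger exponent is processed first can only increase the norm. For
`q' < ∞` it is Minkowski's integral inequality applied to `F ^ q` with exponent `q' / q ≥ 1`; for
`q' = ∞` it follows from `F a b ≤ ess sup_b F a b`, which holds for a.e. `b`, for a.e. `a`.
Bubble sort then reaches the decreasing order through swaps that increase the norm, and the
increasing order through swaps that decrease it.
-/

section Measurability

variable {α β : Type*} [MeasurableSpace α] [MeasurableSpace β] {ν : Measure β}

theorem Measurable.essSup_prod_right [SFinite ν] {f : α × β → ℝ≥0∞} (hf : Measurable f) :
    Measurable fun x => essSup (fun y => f (x, y)) ν := by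
  refine measurable_of_Iic fun t => ?_
  have hnull : MeasurableSet {x | ν (Prod.mk x ⁻¹' {p | t < f p}) = 0} :=
    measurable_measure_prodMk_left (measurableSet_lt measurable_const hf)
      (measurableSet_singleton 0)
  convert hnull using 1
  ext x
  change essSup _ ν ≤ t ↔ ν {y | t < f (x, y)} = 0
  simp_rw [← not_le]
  rw [← ae_iff]
  exact ⟨fun h => (ENNReal.ae_le_essSup _).mono fun y hy => hy.trans h,
    essSup_le_of_ae_le t⟩

end Measurability

section Minkowski

variable {α β : Type*} [MeasurableSpace α] [MeasurableSpace β] {μ : Measure α} {ν : Measure β}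

theorem ENNReal.rpow_one_div_le_of_le_mul_rpow {K R : ℝ≥0∞} {r r' : ℝ}
    (hrr' : r.HolderConjugate r') (hK : K ≠ ∞) (h : K ≤ R * K ^ (1 / r')) :
    K ^ (1 / r) ≤ R := by
  rcases eq_or_ne K 0 with rfl | hK0
  · rw [ENNReal.zero_rpow_of_pos (one_div_pos.mpr hrr'.pos)]
    exact zero_le
  have hsplit : K = K ^ (1 / r) * K ^ (1 / r') := by
    rw [← ENNReal.rpow_add _ _ hK0 hK, one_div, one_div, hrr'.inv_add_inv_eq_one,
      ENNReal.rpow_one]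
  rw [← ENNReal.mul_le_mul_iff_left (ENNReal.rpow_pos (pos_iff_ne_zero.mpr hK0) hK).ne'
    (ENNReal.rpow_ne_top_of_nonneg hrr'.symm.one_div_nonneg hK), ← hsplit]
  exact h

/-- With `K` the `r`-th power of the left-hand side and `R` the right-hand side, Hölder's
inequality against `(∫ G(a, ·) da) ^ (r - 1)` gives `K ≤ R * K ^ (1 / r')`; as `K` is finite,
this can be solved for `K ^ (1 / r)`. -/
theorem lintegral_rpow_lintegral_le_of_ne_top [SFinite μ] [SFinite ν] {r : ℝ} (hr : 1 < r)
    {G : α → β → ℝ≥0∞} (hG : Measurable (Function.uncurry G))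
    (hK : ∫⁻ b, (∫⁻ a, G a b ∂μ) ^ r ∂ν ≠ ∞) :
    (∫⁻ b, (∫⁻ a, G a b ∂μ) ^ r ∂ν) ^ (1 / r) ≤ ∫⁻ a, (∫⁻ b, G a b ^ r ∂ν) ^ (1 / r) ∂μ := by
  have hrr' := Real.HolderConjugate.conjExponent hr
  set r' := r.conjExponent
  set I : β → ℝ≥0∞ := fun b => ∫⁻ a, G a b ∂μ
  have hI : Measurable I := hG.lintegral_prod_left'
  have hIpow : ∀ b, I b ^ r = I b * I b ^ (r - 1) := fun b => by
    conv_lhs => rw [show r = 1 + (r - 1) by ring]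
    rw [ENNReal.rpow_add_of_nonneg _ _ zero_le_one (by linarith), ENNReal.rpow_one]
  have hIconj : ∀ b, (I b ^ (r - 1)) ^ r' = I b ^ r := fun b => by
    rw [← ENNReal.rpow_mul, hrr'.sub_one_mul_conj]
  refine ENNReal.rpow_one_div_le_of_le_mul_rpow hrr' hK ?_
  calc ∫⁻ b, I b ^ r ∂ν = ∫⁻ b, ∫⁻ a, G a b * I b ^ (r - 1) ∂μ ∂ν := by
        refine lintegral_congr fun b => ?_
        rw [hIpow]
        exact (lintegral_mul_const _ (hG.comp measurable_prodMk_right)).symm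
    _ = ∫⁻ a, ∫⁻ b, G a b * I b ^ (r - 1) ∂ν ∂μ :=
        lintegral_lintegral_swap
          ((hG.comp measurable_swap).mul ((hI.pow_const _).comp measurable_fst)).aemeasurable
    _ ≤ ∫⁻ a, (∫⁻ b, G a b ^ r ∂ν) ^ (1 / r) * (∫⁻ b, I b ^ r ∂ν) ^ (1 / r') ∂μ :=
        lintegral_mono fun a => by
          simpa only [Pi.mul_apply, hIconj] using ENNReal.lintegral_mul_le_Lp_mul_Lq ν hrr'
            (f := G a) (hG.comp measurable_prodMk_left).aemeasurable
            (hI.pow_const (r - 1)).aemeasurable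
    _ = (∫⁻ a, (∫⁻ b, G a b ^ r ∂ν) ^ (1 / r) ∂μ) * (∫⁻ b, I b ^ r ∂ν) ^ (1 / r') :=
        lintegral_mul_const _ ((hG.pow_const r).lintegral_prod_right'.pow_const _)

theorem lintegral_rpow_lintegral_lt_top_of_le_indicator {r : ℝ} (hr : 0 < r)
    {A : Set α} {B : Set β} (hA : MeasurableSet A) (hB : MeasurableSet B)
    (hμA : μ A ≠ ∞) (hνB : ν B ≠ ∞) {C : ℝ≥0∞} (hC : C ≠ ∞) {G : α → β → ℝ≥0∞}
    (hG : ∀ a b, G a b ≤ (A ×ˢ B).indicator (fun _ => C) (a, b)) :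
    ∫⁻ b, (∫⁻ a, G a b ∂μ) ^ r ∂ν < ∞ := by
  have hbound : ∀ b, (∫⁻ a, G a b ∂μ) ^ r ≤ B.indicator (fun _ => (C * μ A) ^ r) b := by
    intro b
    by_cases hb : b ∈ B
    · rw [Set.indicator_of_mem hb]
      gcongr
      calc ∫⁻ a, G a b ∂μ ≤ ∫⁻ a, A.indicator (fun _ => C) a ∂μ :=
            lintegral_mono fun a => (hG a b).trans_eq (by by_cases ha : a ∈ A <;> simp [ha, hb])
        _ = C * μ A := lintegral_indicator_const hA C
    · have hG0 : ∀ a, G a b = 0 := fun a => le_zero_iff.mp ((hG a b).trans_eq (by simp [hb]))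
      simp [hG0, ENNReal.zero_rpow_of_pos hr]
  calc ∫⁻ b, (∫⁻ a, G a b ∂μ) ^ r ∂ν ≤ ∫⁻ b, B.indicator (fun _ => (C * μ A) ^ r) b ∂ν :=
        lintegral_mono hbound
    _ = (C * μ A) ^ r * ν B := lintegral_indicator_const hB _
    _ < ∞ := ENNReal.mul_lt_top
        (ENNReal.rpow_lt_top_of_nonneg hr.le (ENNReal.mul_ne_top hC hμA)) hνB.lt_top

theorem lintegral_rpow_lintegral_iSup [SFinite μ] {r : ℝ} (hr : 0 < r)
    {G : ℕ → α → β → ℝ≥0∞} (hG : ∀ m, Measurable (Function.uncurry (G m))) (hmono : Monotone G) :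
    ∫⁻ b, (∫⁻ a, ⨆ m, G m a b ∂μ) ^ r ∂ν = ⨆ m, ∫⁻ b, (∫⁻ a, G m a b ∂μ) ^ r ∂ν := by
  have hinner : ∀ b, (∫⁻ a, ⨆ m, G m a b ∂μ) ^ r = ⨆ m, (∫⁻ a, G m a b ∂μ) ^ r := fun b => by
    rw [lintegral_iSup (f := fun m a => G m a b) (fun m => (hG m).comp measurable_prodMk_right)
      (fun m k h a => hmono h a b)]
    exact (ENNReal.orderIsoRpow r hr).map_iSup _
  simp_rw [hinner]
  exact lintegral_iSup (fun m => ((hG m).lintegral_prod_left').pow_const r)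
    (fun m k h b => by gcongr; exact hmono h _ _)

/-- **Minkowski's integral inequality**. -/
theorem lintegral_rpow_lintegral_le [SigmaFinite μ] [SigmaFinite ν] {r : ℝ} (hr : 1 ≤ r)
    {G : α → β → ℝ≥0∞} (hG : Measurable (Function.uncurry G)) :
    (∫⁻ b, (∫⁻ a, G a b ∂μ) ^ r ∂ν) ^ (1 / r) ≤ ∫⁻ a, (∫⁻ b, G a b ^ r ∂ν) ^ (1 / r) ∂μ := by
  rcases hr.eq_or_lt with rfl | hr
  · simpa using (lintegral_lintegral_swap hG.aemeasurable).ge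
  -- Truncate `G` to `min G m` on the finite-measure rectangles `Aₘ × Bₘ` exhausting `α × β`.
  set c : ℕ → α × β → ℝ≥0∞ :=
    fun m => (spanningSets μ m ×ˢ spanningSets ν m).indicator fun _ => m
  have hc_meas : ∀ m, MeasurableSet (spanningSets μ m ×ˢ spanningSets ν m) := fun m =>
    (measurableSet_spanningSets μ m).prod (measurableSet_spanningSets ν m)
  have hc_mono : Monotone c := fun m k h p =>
    (Set.indicator_le_indicator_of_subset
      (Set.prod_mono (monotone_spanningSets μ h) (monotone_spanningSets ν h))
      (fun _ => zero_le) p).trans (Set.indicator_le_indicator (by exact_mod_cast h))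
  have hc_top : ∀ p, ⨆ m, c m p = ∞ := fun p => by
    set N := max (spanningSetsIndex μ p.1) (spanningSetsIndex ν p.2)
    have hp : ∀ k, p ∈ spanningSets μ (k + N) ×ˢ spanningSets ν (k + N) := fun k =>
      ⟨monotone_spanningSets μ (by omega) (mem_spanningSetsIndex μ p.1),
        monotone_spanningSets ν (by omega) (mem_spanningSetsIndex ν p.2)⟩
    refine eq_top_iff.mpr (ENNReal.iSup_natCast ▸ iSup_le fun k => le_iSup_of_le (k + N) ?_)
    simp only [c, Set.indicator_of_mem (hp k)]
    exact_mod_cast k.le_add_right N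
  set G' : ℕ → α → β → ℝ≥0∞ := fun m a b => min (G a b) (c m (a, b))
  have hG'_meas : ∀ m, Measurable (Function.uncurry (G' m)) := fun m =>
    hG.min (measurable_const.indicator (hc_meas m))
  have hG'_mono : Monotone G' := fun m k h a b => min_le_min_left _ (hc_mono h _)
  have hG'_sup : ∀ a b, ⨆ m, G' m a b = G a b := fun a b => by
    simp only [G', ← inf_iSup_eq, hc_top, inf_top_eq]
  have hG'_fin : ∀ m, ∫⁻ b, (∫⁻ a, G' m a b ∂μ) ^ r ∂ν ≠ ∞ := fun m =>
    (lintegral_rpow_lintegral_lt_top_of_le_indicator (by positivity)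
      (measurableSet_spanningSets μ m) (measurableSet_spanningSets ν m)
      (measure_spanningSets_lt_top μ m).ne (measure_spanningSets_lt_top ν m).ne
      (ENNReal.natCast_ne_top m) fun a b => min_le_right _ _).ne
  calc (∫⁻ b, (∫⁻ a, G a b ∂μ) ^ r ∂ν) ^ (1 / r)
      = (⨆ m, ∫⁻ b, (∫⁻ a, G' m a b ∂μ) ^ r ∂ν) ^ (1 / r) := by
        simp_rw [← hG'_sup]
        rw [lintegral_rpow_lintegral_iSup (by positivity) hG'_meas hG'_mono]
    _ = ⨆ m, (∫⁻ b, (∫⁻ a, G' m a b ∂μ) ^ r ∂ν) ^ (1 / r) :=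
        (ENNReal.orderIsoRpow (1 / r) (by positivity)).map_iSup _
    _ ≤ ∫⁻ a, (∫⁻ b, G a b ^ r ∂ν) ^ (1 / r) ∂μ := iSup_le fun m =>
        (lintegral_rpow_lintegral_le_of_ne_top hr (hG'_meas m) (hG'_fin m)).trans
          (by gcongr with a b; exact min_le_left _ _)

end Minkowski

section Swap

variable {α β : Type*} [MeasurableSpace α] [MeasurableSpace β] {μ : Measure α} {ν : Measure β}

theorem eLpNorm_lintegral_le [SigmaFinite μ] [SigmaFinite ν] {p : ℝ≥0∞} (hp : 1 ≤ p)
    (hp_top : p ≠ ∞) {G : α → β → ℝ≥0∞} (hG : Measurable (Function.uncurry G)) :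
    eLpNorm (fun b => ∫⁻ a, G a b ∂μ) p ν ≤ ∫⁻ a, eLpNorm (G a) p ν ∂μ := by
  have hp0 : p ≠ 0 := (zero_lt_one.trans_le hp).ne'
  simp only [eLpNorm_eq_lintegral_rpow_enorm_toReal hp0 hp_top, enorm_eq_self]
  exact lintegral_rpow_lintegral_le (by simpa using ENNReal.toReal_mono hp_top hp) hG

theorem eLpNorm_top_eLpNorm_swap_le [SFinite μ] [SFinite ν] {q : ℝ≥0∞}
    {F : α → β → ℝ≥0∞} (hF : Measurable (Function.uncurry F)) :
    eLpNorm (fun b => eLpNorm (fun a => F a b) q μ) ∞ ν ≤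
      eLpNorm (fun a => eLpNorm (F a) ∞ ν) q μ := by
  set H : α → ℝ≥0∞ := fun a => essSup (F a) ν
  have hH : Measurable H := hF.essSup_prod_right
  have hslice : ∀ᵐ b ∂ν, ∀ᵐ a ∂μ, F a b ≤ H a :=
    (Measure.ae_ae_comm (p := fun a b => F a b ≤ H a)
      (measurableSet_le hF (hH.comp measurable_fst))).mp
      (Filter.Eventually.of_forall fun a => ENNReal.ae_le_essSup (F a))
  simp only [eLpNorm_exponent_top, eLpNormEssSup_eq_essSup_enorm, enorm_eq_self]
  exact essSup_le_of_ae_le _ (hslice.mono fun b hb => eLpNorm_mono_enorm_ae hb)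

theorem eLpNorm_eLpNorm_swap_le_of_ne_top [SigmaFinite μ] [SigmaFinite ν] {q q' : ℝ≥0∞}
    (hq : 0 < q) (hqq' : q ≤ q') (hq' : q' ≠ ∞)
    {F : α → β → ℝ≥0∞} (hF : Measurable (Function.uncurry F)) :
    eLpNorm (fun b => eLpNorm (fun a => F a b) q μ) q' ν ≤
      eLpNorm (fun a => eLpNorm (F a) q' ν) q μ := by
  have hq_top : q ≠ ∞ := ne_top_of_le_ne_top hq' hqq'
  set s := q.toReal
  have hs : 0 < s := ENNReal.toReal_pos hq.ne' hq_top
  have hqs : ENNReal.ofReal s = q := ENNReal.ofReal_toReal hq_top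
  -- `‖F‖_{L^q_a} = (∫ F^s da)^(1/s)`, and Minkowski applies to `F^s` with exponent `q'/q ≥ 1`.
  set r := q' * ENNReal.ofReal (1 / s)
  have hr : 1 ≤ r :=
    calc 1 = ENNReal.ofReal s * ENNReal.ofReal (1 / s) := by
          rw [← ENNReal.ofReal_mul hs.le, mul_one_div_cancel hs.ne', ENNReal.ofReal_one]
      _ ≤ r := by rw [hqs]; exact mul_le_mul_of_nonneg_right hqq' zero_le
  have hr_top : r ≠ ∞ := ENNReal.mul_ne_top hq' ENNReal.ofReal_ne_top
  have hrs : r * ENNReal.ofReal s = q' := by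
    rw [mul_assoc, ← ENNReal.ofReal_mul (by positivity), one_div_mul_cancel hs.ne',
      ENNReal.ofReal_one, mul_one]
  have hinner : ∀ b, eLpNorm (fun a => F a b) q μ = (∫⁻ a, F a b ^ s ∂μ) ^ (1 / s) := fun b => by
    simp only [eLpNorm_eq_lintegral_rpow_enorm_toReal hq.ne' hq_top, enorm_eq_self, s]
  calc eLpNorm (fun b => eLpNorm (fun a => F a b) q μ) q' ν
      = eLpNorm (fun b => ∫⁻ a, F a b ^ s ∂μ) r ν ^ (1 / s) := by
        simp_rw [hinner]
        simpa only [enorm_eq_self] using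
          eLpNorm_enorm_rpow (μ := ν) (p := q') (fun b => ∫⁻ a, F a b ^ s ∂μ) (q := 1 / s)
            (by positivity)
    _ ≤ (∫⁻ a, eLpNorm (fun b => F a b ^ s) r ν ∂μ) ^ (1 / s) :=
        ENNReal.rpow_le_rpow (eLpNorm_lintegral_le hr hr_top (hF.pow_const s)) (by positivity)
    _ = eLpNorm (fun a => eLpNorm (F a) q' ν) q μ := by
        have hpow : ∀ a, eLpNorm (fun b => F a b ^ s) r ν = eLpNorm (F a) q' ν ^ s := fun a => by
          simpa only [enorm_eq_self, hrs] using eLpNorm_enorm_rpow (μ := ν) (p := r) (F a) hs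
        simp only [hpow, eLpNorm_eq_lintegral_rpow_enorm_toReal hq.ne' hq_top, enorm_eq_self, s]

theorem eLpNorm_eLpNorm_swap_le [SigmaFinite μ] [SigmaFinite ν] {q q' : ℝ≥0∞}
    (hq : 0 < q) (hqq' : q ≤ q') {F : α → β → ℝ≥0∞} (hF : Measurable (Function.uncurry F)) :
    eLpNorm (fun b => eLpNorm (fun a => F a b) q μ) q' ν ≤
      eLpNorm (fun a => eLpNorm (F a) q' ν) q μ := by
  rcases eq_or_ne q' ∞ with rfl | hq'
  · exact eLpNorm_top_eLpNorm_swap_le hF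
  · exact eLpNorm_eLpNorm_swap_le_of_ne_top hq hqq' hq' hF

end Swap

section MixedNorm

variable {n : ℕ} {X : Fin n → Type*} [∀ j, MeasurableSpace (X j)] {μ : ∀ j, Measure (X j)}

theorem normIn_apply_eq_eLpNorm {q : ℝ≥0∞} (hq : q ≠ 0) (j : Fin n) (f : (∀ k, X k) → ℝ≥0∞)
    (x : ∀ k, X k) : normIn μ j q f x = eLpNorm (fun t => f (Function.update x j t)) q (μ j) := by
  unfold normIn
  split_ifs with hq_top
  · simp [hq_top, eLpNorm_exponent_top, eLpNormEssSup_eq_essSup_enorm]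
  · simp [eLpNorm_eq_lintegral_rpow_enorm_toReal hq hq_top]

theorem normIn_mono {j : Fin n} {q : ℝ≥0∞} : Monotone (normIn μ j q) := fun f g h x => by
  unfold normIn
  split_ifs
  · exact essSup_mono_ae (Filter.Eventually.of_forall fun t => h _)
  · gcongr
    exact h _

theorem measurable_normIn {j : Fin n} [SFinite (μ j)] {q : ℝ≥0∞} {f : (∀ k, X k) → ℝ≥0∞}
    (hf : Measurable f) : Measurable (normIn μ j q f) := by
  have hF : Measurable fun y : (∀ k, X k) × X j => f (Function.update y.1 j y.2) :=
    hf.comp measurable_update'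
  unfold normIn
  split_ifs
  · exact hF.essSup_prod_right
  · exact (hF.pow_const _).lintegral_prod_right'.pow_const _

theorem normIn_normIn_swap_le {j j' : Fin n} [SigmaFinite (μ j)] [SigmaFinite (μ j')]
    (hjj' : j ≠ j') {q q' : ℝ≥0∞} (hq : 0 < q) (hqq' : q ≤ q') {f : (∀ k, X k) → ℝ≥0∞}
    (hf : Measurable f) : normIn μ j' q' (normIn μ j q f) ≤ normIn μ j q (normIn μ j' q' f) := by
  intro x
  have hq' : q' ≠ 0 := (hq.trans_le hqq').ne'
  set F : X j → X j' → ℝ≥0∞ := fun a b => f (Function.update (Function.update x j a) j' b)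
  have hF : Measurable (Function.uncurry F) :=
    hf.comp (measurable_update'.comp
      (((measurable_update x).comp measurable_fst).prodMk measurable_snd))
  simp only [normIn_apply_eq_eLpNorm hq.ne', normIn_apply_eq_eLpNorm hq',
    Function.update_comm hjj'.symm]
  exact eLpNorm_eLpNorm_swap_le hq hqq' hF

noncomputable def iterNorm (μ : ∀ j, Measure (X j)) (p : Fin n → ℝ≥0∞) (l : List (Fin n))
    (f : (∀ k, X k) → ℝ≥0∞) : (∀ k, X k) → ℝ≥0∞ :=
  l.foldl (fun g j => normIn μ j (p j) g) f

theorem mixedNorm_ofFn {m : ℕ} (v : Fin m → Fin n) (p : Fin n → ℝ≥0∞)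
    (f : (∀ k, X k) → ℝ≥0∞) :
    mixedNorm μ (List.ofFn fun k => (v k, p (v k))) f = ⨆ x, iterNorm μ p (List.ofFn v) f x := by
  have hmap : (List.ofFn fun k => (v k, p (v k))) = (List.ofFn v).map fun j => (j, p j) := by
    simp [List.map_ofFn, Function.comp_def]
  rw [mixedNorm, hmap, List.foldl_map, iterNorm]

variable {p : Fin n → ℝ≥0∞}

theorem iterNorm_mono (l : List (Fin n)) : Monotone (iterNorm μ p l) := by
  induction l with
  | nil => exact monotone_id
  | cons j l ih => exact ih.comp normIn_mono

theorem iterNorm_cons_cons_le {j j' : Fin n} [SigmaFinite (μ j)] [SigmaFinite (μ j')]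
    (hjj' : j ≠ j') (hp : 0 < p j) (hpp : p j ≤ p j') (l : List (Fin n))
    {f : (∀ k, X k) → ℝ≥0∞} (hf : Measurable f) :
    iterNorm μ p (j :: j' :: l) f ≤ iterNorm μ p (j' :: j :: l) f :=
  iterNorm_mono l (normIn_normIn_swap_le hjj' hp hpp hf)

variable [∀ j, SigmaFinite (μ j)]

theorem iterNorm_append_cons_le_cons_append (hp : ∀ j, 0 < p j) {j : Fin n}
    {l₁ : List (Fin n)} (hj : j ∉ l₁) (hmax : ∀ i ∈ l₁, p i ≤ p j) (l₂ : List (Fin n))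
    {f : (∀ k, X k) → ℝ≥0∞} (hf : Measurable f) :
    iterNorm μ p (l₁ ++ j :: l₂) f ≤ iterNorm μ p (j :: (l₁ ++ l₂)) f := by
  induction l₁ generalizing f with
  | nil => exact le_rfl
  | cons i t ih =>
    rw [List.mem_cons, not_or] at hj
    calc iterNorm μ p (i :: t ++ j :: l₂) f
        = iterNorm μ p (t ++ j :: l₂) (normIn μ i (p i) f) := rfl
      _ ≤ iterNorm μ p (j :: (t ++ l₂)) (normIn μ i (p i) f) :=
        ih hj.2 (fun i' hi' => hmax i' (List.mem_cons_of_mem i hi')) (measurable_normIn hf)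
      _ = iterNorm μ p (i :: j :: (t ++ l₂)) f := rfl
      _ ≤ iterNorm μ p (j :: i :: (t ++ l₂)) f :=
        iterNorm_cons_cons_le (Ne.symm hj.1) (hp i) (hmax i List.mem_cons_self) _ hf

theorem iterNorm_cons_append_le_append_cons (hp : ∀ j, 0 < p j) {j : Fin n}
    {l₁ : List (Fin n)} (hj : j ∉ l₁) (hmin : ∀ i ∈ l₁, p j ≤ p i) (l₂ : List (Fin n))
    {f : (∀ k, X k) → ℝ≥0∞} (hf : Measurable f) :
    iterNorm μ p (j :: (l₁ ++ l₂)) f ≤ iterNorm μ p (l₁ ++ j :: l₂) f := by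
  induction l₁ generalizing f with
  | nil => exact le_rfl
  | cons i t ih =>
    rw [List.mem_cons, not_or] at hj
    calc iterNorm μ p (j :: i :: (t ++ l₂)) f
        ≤ iterNorm μ p (i :: j :: (t ++ l₂)) f :=
        iterNorm_cons_cons_le hj.1 (hp j) (hmin i List.mem_cons_self) _ hf
      _ = iterNorm μ p (j :: (t ++ l₂)) (normIn μ i (p i) f) := rfl
      _ ≤ iterNorm μ p (t ++ j :: l₂) (normIn μ i (p i) f) :=
        ih hj.2 (fun i' hi' => hmin i' (List.mem_cons_of_mem i hi')) (measurable_normIn hf)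

theorem iterNorm_le_of_perm_of_pairwise_ge (hp : ∀ j, 0 < p j) {l l' : List (Fin n)}
    (hl : l.Nodup) (hperm : l.Perm l') (hsort : l'.Pairwise fun i j => p j ≤ p i)
    {f : (∀ k, X k) → ℝ≥0∞} (hf : Measurable f) : iterNorm μ p l f ≤ iterNorm μ p l' f := by
  induction l' generalizing l f with
  | nil => rw [List.perm_nil.mp hperm]
  | cons j t ih =>
    obtain ⟨l₁, l₂, rfl⟩ := List.append_of_mem (hperm.mem_iff.mpr List.mem_cons_self)
    have hnd := List.nodup_cons.mp (List.nodup_middle.mp hl)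
    have ht : (l₁ ++ l₂).Perm t := (List.perm_cons j).mp (List.perm_middle.symm.trans hperm)
    calc iterNorm μ p (l₁ ++ j :: l₂) f ≤ iterNorm μ p (j :: (l₁ ++ l₂)) f :=
          iterNorm_append_cons_le_cons_append hp (fun h => hnd.1 (List.mem_append_left _ h))
            (fun i hi => List.rel_of_pairwise_cons hsort (ht.subset (List.mem_append_left _ hi)))
            l₂ hf
      _ ≤ iterNorm μ p (j :: t) f := ih hnd.2 ht hsort.of_cons (measurable_normIn hf)

theorem iterNorm_le_of_perm_of_pairwise_le (hp : ∀ j, 0 < p j) {l l' : List (Fin n)}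
    (hl : l.Nodup) (hperm : l.Perm l') (hsort : l'.Pairwise fun i j => p i ≤ p j)
    {f : (∀ k, X k) → ℝ≥0∞} (hf : Measurable f) : iterNorm μ p l' f ≤ iterNorm μ p l f := by
  induction l' generalizing l f with
  | nil => rw [List.perm_nil.mp hperm]
  | cons j t ih =>
    obtain ⟨l₁, l₂, rfl⟩ := List.append_of_mem (hperm.mem_iff.mpr List.mem_cons_self)
    have hnd := List.nodup_cons.mp (List.nodup_middle.mp hl)
    have ht : (l₁ ++ l₂).Perm t := (List.perm_cons j).mp (List.perm_middle.symm.trans hperm)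
    calc iterNorm μ p (j :: t) f ≤ iterNorm μ p (j :: (l₁ ++ l₂)) f :=
          ih hnd.2 ht hsort.of_cons (measurable_normIn hf)
      _ ≤ iterNorm μ p (l₁ ++ j :: l₂) f :=
          iterNorm_cons_append_le_append_cons hp (fun h => hnd.1 (List.mem_append_left _ h))
            (fun i hi => List.rel_of_pairwise_cons hsort (ht.subset (List.mem_append_left _ hi)))
            l₂ hf

end MixedNorm

/-- Fournier's fully-sorted Minkowski inequality: if `σ` sorts the exponents into
decreasing order and `ρ` sorts them into increasing order, then
`‖f‖_{P·ρ} ≤ ‖f‖_P ≤ ‖f‖_{P·σ}` for every nonnegative measurable `f`. -/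
theorem mixedNorm_fully_sorted {n : ℕ} {X : Fin n → Type*}
    [∀ j, MeasurableSpace (X j)] (μ : ∀ j, Measure (X j)) [∀ j, SigmaFinite (μ j)]
    (p : Fin n → ℝ≥0∞) (hp : ∀ j, 0 < p j)
    (σ ρ : Equiv.Perm (Fin n))
    (hσ : ∀ i j : Fin n, i ≤ j → p (σ j) ≤ p (σ i))
    (hρ : ∀ i j : Fin n, i ≤ j → p (ρ i) ≤ p (ρ j))
    (f : (∀ k, X k) → ℝ≥0∞) (hf : Measurable f) :
    mixedNorm μ (List.ofFn fun k => (ρ k, p (ρ k))) f ≤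
        mixedNorm μ (List.ofFn fun k => (k, p k)) f ∧
      mixedNorm μ (List.ofFn fun k => (k, p k)) f ≤
        mixedNorm μ (List.ofFn fun k => (σ k, p (σ k))) f := by
  have hnodup : (List.ofFn fun k : Fin n => k).Nodup := List.nodup_ofFn.mpr fun _ _ h => h
  have hperm (τ : Equiv.Perm (Fin n)) : (List.ofFn fun k => k).Perm (List.ofFn τ) :=
    (Equiv.Perm.ofFn_comp_perm τ id).symm
  simp only [mixedNorm_ofFn]
  exact ⟨iSup_mono <| iterNorm_le_of_perm_of_pairwise_le hp hnodup (hperm ρ)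
      (List.pairwise_ofFn.mpr fun i j h => hρ i j h.le) hf,
    iSup_mono <| iterNorm_le_of_perm_of_pairwise_ge hp hnodup (hperm σ)
      (List.pairwise_ofFn.mpr fun i j h => hσ i j h.le) hf⟩
end

section
/- Mixed-norm Hölder inequality (Benedek–Panzone): let (X₁,μ₁),…,(Xₙ,μₙ) be σ-finite measure spaces with product (X,μ), let f₁,…,f_m be nonnegative measurable functions on X, and for each i let Pᵢ be the double n-tuple pairing exponent p_{i,j} ∈ (0,∞] with variable xⱼ, all Pᵢ taking the variables in the same order x₁,…,xₙ. If for each j ∈ {1,…,n} one has Σ_{i=1}^m 1/p_{i,j} = 1, then ∫_X f₁⋯f_m dμ ≤ ‖f₁‖_{P₁} ⋯ ‖f_m‖_{P_m}. -/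
open MeasureTheory
open scoped ENNReal

/-! Induct on the number of variables. Integrating out `x₁` first, the one-variable Hölder
inequality bounds the inner integral of `∏ fᵢ` by `∏ ‖fᵢ(·, x₂, …)‖_{p_{i,1}}`;
these are measurable functions of the remaining variables whose mixed norms along `x₂, …, xₙ`
are exactly the mixed norms of the `fᵢ`, so the induction hypothesis applies. In the
one-variable inequality the factors with exponent `∞` are bounded by their essential suprema
and pulled out of the integral, and the rest is the classical finite-exponent Hölder. -/

open Function

theorem ENNReal.essSup_le_iff_measure_lt_eq_zero {β : Type*} [MeasurableSpace β]
    {ν : Measure β} (h : β → ℝ≥0∞) (c : ℝ≥0∞) :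
    essSup h ν ≤ c ↔ ν {t | c < h t} = 0 := by
  simp only [← not_le, ← ae_iff]
  exact ⟨fun hc => (ENNReal.ae_le_essSup h).mono fun t ht => ht.trans hc, essSup_le_of_ae_le c⟩

section Parametric

variable {α β : Type*} [MeasurableSpace α] [MeasurableSpace β] {ν : Measure β} [SFinite ν]
  {g : α → β → ℝ≥0∞}

theorem Measurable.essSup_prod_right_s7 (hg : Measurable (uncurry g)) :
    Measurable fun a => essSup (g a) ν := by
  refine measurable_of_Iic fun c => ?_
  have hsub : (fun a => essSup (g a) ν) ⁻¹' Set.Iic c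
      = (fun a => ν (Prod.mk a ⁻¹' {z | c < uncurry g z})) ⁻¹' {0} := by
    ext a
    exact ENNReal.essSup_le_iff_measure_lt_eq_zero (g a) c
  rw [hsub]
  exact measurable_measure_prodMk_left (measurableSet_lt measurable_const hg)
    (measurableSet_singleton 0)

theorem Measurable.eLpNorm_prod_right (hg : Measurable (uncurry g)) (q : ℝ≥0∞) :
    Measurable fun a => eLpNorm (g a) q ν := by
  rcases eq_or_ne q 0 with rfl | hq0
  · simp only [eLpNorm_exponent_zero, measurable_const]
  rcases eq_or_ne q ∞ with rfl | hqtop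
  · simp only [eLpNorm_exponent_top, eLpNormEssSup, enorm_eq_self]
    exact Measurable.essSup_prod_right_s7 hg
  simp only [eLpNorm_eq_eLpNorm' hq0 hqtop, eLpNorm', enorm_eq_self]
  exact (Measurable.lintegral_prod_right (hg.pow_const _)).pow_const _

end Parametric

section Holder

variable {α ι : Type*} [MeasurableSpace α] {ν : Measure α} {s : Finset ι} {q : ι → ℝ≥0∞}
  {g : ι → α → ℝ≥0∞}

theorem ENNReal.ne_zero_of_sum_inv_eq_one (hq : ∑ i ∈ s, (q i)⁻¹ = 1) {i : ι} (hi : i ∈ s) :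
    q i ≠ 0 := by
  intro h
  have := Finset.single_le_sum (f := fun i => (q i)⁻¹) (fun _ _ => zero_le) hi
  simp [h, hq] at this

theorem lintegral_prod_le_prod_eLpNorm_of_ne_top (hg : ∀ i ∈ s, AEMeasurable (g i) ν)
    (hq : ∑ i ∈ s, (q i)⁻¹ = 1) (hq_top : ∀ i ∈ s, q i ≠ ∞) :
    ∫⁻ t, ∏ i ∈ s, g i t ∂ν ≤ ∏ i ∈ s, eLpNorm (g i) (q i) ν := by
  have hq0 := fun i (hi : i ∈ s) => ENNReal.ne_zero_of_sum_inv_eq_one hq hi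
  have hq_real : ∑ i ∈ s, 1 / (q i).toReal = 1 := by
    have := congrArg ENNReal.toReal hq
    rw [ENNReal.toReal_sum fun i hi => ENNReal.inv_ne_top.2 (hq0 i hi)] at this
    simpa [ENNReal.toReal_inv] using this
  have hpow : ∀ i ∈ s, ∀ t, (g i t ^ (q i).toReal) ^ (1 / (q i).toReal) = g i t := fun i hi t => by
    rw [← ENNReal.rpow_mul, mul_one_div_cancel (ENNReal.toReal_ne_zero.2 ⟨hq0 i hi, hq_top i hi⟩),
      ENNReal.rpow_one]
  calc ∫⁻ t, ∏ i ∈ s, g i t ∂ν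
      = ∫⁻ t, ∏ i ∈ s, (g i t ^ (q i).toReal) ^ (1 / (q i).toReal) ∂ν :=
        lintegral_congr fun t => (Finset.prod_congr rfl fun i hi => hpow i hi t).symm
    _ ≤ ∏ i ∈ s, (∫⁻ t, g i t ^ (q i).toReal ∂ν) ^ (1 / (q i).toReal) :=
        ENNReal.lintegral_prod_norm_pow_le s (fun i hi => (hg i hi).pow_const _) hq_real
          fun i _ => by positivity
    _ = ∏ i ∈ s, eLpNorm (g i) (q i) ν := Finset.prod_congr rfl fun i hi => by
        simp [eLpNorm_eq_eLpNorm' (hq0 i hi) (hq_top i hi), eLpNorm']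

theorem lintegral_prod_le_prod_eLpNorm (hg : ∀ i ∈ s, AEMeasurable (g i) ν)
    (hq : ∑ i ∈ s, (q i)⁻¹ = 1) :
    ∫⁻ t, ∏ i ∈ s, g i t ∂ν ≤ ∏ i ∈ s, eLpNorm (g i) (q i) ν := by
  classical
  set S := s.filter (q · = ∞)
  set F := s.filter (q · ≠ ∞)
  have hF : ∀ i ∈ F, AEMeasurable (g i) ν := fun i hi => hg i (Finset.mem_filter.1 hi).1
  have hqF : ∑ i ∈ F, (q i)⁻¹ = 1 := by
    rw [← hq]
    exact Finset.sum_filter_of_ne fun i _ h hi => h (by simp [hi])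
  have hS : ∀ᵐ t ∂ν, ∀ i ∈ S, g i t ≤ eLpNorm (g i) (q i) ν := by
    refine (Filter.eventually_all_finset S).2 fun i hi => ?_
    rw [(Finset.mem_filter.1 hi).2, eLpNorm_exponent_top]
    exact ae_le_eLpNormEssSup
  calc ∫⁻ t, ∏ i ∈ s, g i t ∂ν
      = ∫⁻ t, (∏ i ∈ S, g i t) * ∏ i ∈ F, g i t ∂ν := by
        simp only [S, F, Finset.prod_filter_mul_prod_filter_not]
    _ ≤ ∫⁻ t, (∏ i ∈ S, eLpNorm (g i) (q i) ν) * ∏ i ∈ F, g i t ∂ν :=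
        lintegral_mono_ae <| hS.mono fun t ht => by gcongr with i hi; exact ht i hi
    _ = (∏ i ∈ S, eLpNorm (g i) (q i) ν) * ∫⁻ t, ∏ i ∈ F, g i t ∂ν := by
        rw [lintegral_const_mul'' _ (F.aemeasurable_fun_prod hF)]
    _ ≤ (∏ i ∈ S, eLpNorm (g i) (q i) ν) * ∏ i ∈ F, eLpNorm (g i) (q i) ν := by
        gcongr
        exact lintegral_prod_le_prod_eLpNorm_of_ne_top hF hqF fun i hi => (Finset.mem_filter.1 hi).2
    _ = ∏ i ∈ s, eLpNorm (g i) (q i) ν := Finset.prod_filter_mul_prod_filter_not s _ _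

end Holder

section FinCons

variable {n : ℕ} {X : Fin (n + 1) → Type*} [∀ j, MeasurableSpace (X j)]

theorem measurable_fin_cons :
    Measurable fun z : X 0 × (∀ k : Fin n, X k.succ) => (Fin.cons z.1 z.2 : ∀ j, X j) := by
  refine measurable_pi_iff.2 fun j => Fin.cases ?_ (fun k => ?_) j
  · exact measurable_fst
  · exact (measurable_pi_apply k).comp measurable_snd

theorem lintegral_pi_fin_succ (μ : ∀ j, Measure (X j)) [∀ j, SigmaFinite (μ j)]
    {F : (∀ j, X j) → ℝ≥0∞} (hF : Measurable F) :
    ∫⁻ x, F x ∂Measure.pi μ =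
      ∫⁻ y, ∫⁻ t, F (Fin.cons t y) ∂μ 0 ∂Measure.pi fun k => μ k.succ := by
  have e := (measurePreserving_piFinSuccAbove μ 0).symm
  rw [← e.lintegral_comp hF, lintegral_prod_symm]
  · simp only [MeasurableEquiv.piFinSuccAbove_symm_apply, Fin.insertNthEquiv,
      Equiv.coe_fn_mk, Fin.insertNth_zero]
    rfl
  · exact (hF.comp e.measurable).aemeasurable

end FinCons

section IteratedNorm

variable {n : ℕ} {X : Fin n → Type*} [∀ j, MeasurableSpace (X j)]

noncomputable def iteratedNorm (μ : ∀ j, Measure (X j)) (P : List (Fin n × ℝ≥0∞))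
    (f : (∀ k, X k) → ℝ≥0∞) : (∀ k, X k) → ℝ≥0∞ :=
  P.foldl (fun g jq => normIn μ jq.1 jq.2 g) f

theorem mixedNorm_eq_iSup_iteratedNorm (μ : ∀ j, Measure (X j)) (P : List (Fin n × ℝ≥0∞))
    (f : (∀ k, X k) → ℝ≥0∞) : mixedNorm μ P f = ⨆ x, iteratedNorm μ P f x :=
  rfl

theorem iteratedNorm_cons (μ : ∀ j, Measure (X j)) (jq : Fin n × ℝ≥0∞)
    (P : List (Fin n × ℝ≥0∞)) (f : (∀ k, X k) → ℝ≥0∞) :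
    iteratedNorm μ (jq :: P) f = iteratedNorm μ P (normIn μ jq.1 jq.2 f) :=
  rfl

theorem normIn_eq_eLpNorm (μ : ∀ j, Measure (X j)) (j : Fin n) {q : ℝ≥0∞} (hq : q ≠ 0)
    (f : (∀ k, X k) → ℝ≥0∞) (x : ∀ k, X k) :
    normIn μ j q f x = eLpNorm (fun t => f (update x j t)) q (μ j) := by
  unfold normIn
  split_ifs with htop
  · simp [htop, eLpNorm_exponent_top, eLpNormEssSup]
  · simp [eLpNorm_eq_eLpNorm' hq htop, eLpNorm']

end IteratedNorm

section Succ

variable {n : ℕ} {X : Fin (n + 1) → Type*} [∀ j, MeasurableSpace (X j)] (μ : ∀ j, Measure (X j))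

theorem normIn_succ_apply_cons (k : Fin n) (q : ℝ≥0∞) (G : (∀ j, X j) → ℝ≥0∞) (a : X 0) :
    (fun y => normIn μ k.succ q G (Fin.cons a y)) =
      normIn (fun k => μ k.succ) k q fun y => G (Fin.cons a y) := by
  funext y
  simp only [normIn, Fin.cons_update]

theorem iteratedNorm_map_succ_apply_cons (P : List (Fin n × ℝ≥0∞)) (G : (∀ j, X j) → ℝ≥0∞)
    (a : X 0) (y : ∀ k : Fin n, X k.succ) :
    iteratedNorm μ (P.map (Prod.map Fin.succ id)) G (Fin.cons a y) =
      iteratedNorm (fun k => μ k.succ) P (fun y => G (Fin.cons a y)) y := by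
  induction P generalizing G with
  | nil => rfl
  | cons kq P ih =>
    obtain ⟨k, q⟩ := kq
    simp only [List.map_cons, iteratedNorm_cons, Prod.map_apply, id]
    rw [ih, normIn_succ_apply_cons]

theorem mixedNorm_ofFn_succ [Nonempty (X 0)] (p : Fin (n + 1) → ℝ≥0∞) (hp : p 0 ≠ 0)
    (f : (∀ j, X j) → ℝ≥0∞) :
    mixedNorm μ (List.ofFn fun j => (j, p j)) f =
      mixedNorm (fun k => μ k.succ) (List.ofFn fun k => (k, p k.succ))
        (fun y => eLpNorm (fun t => f (Fin.cons t y)) (p 0) (μ 0)) := by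
  have hP : (List.ofFn fun j => (j, p j)) =
      (0, p 0) :: (List.ofFn fun k => (k, p k.succ)).map (Prod.map Fin.succ id) := by
    rw [List.ofFn_succ, List.map_ofFn]
    rfl
  rw [mixedNorm_eq_iSup_iteratedNorm, mixedNorm_eq_iSup_iteratedNorm, hP,
    ← (Fin.consEquiv X).iSup_comp, iSup_prod, iSup_comm]
  have hfirst : ∀ a : X 0, (fun y => normIn μ 0 (p 0) f (Fin.cons a y)) =
      fun y => eLpNorm (fun t => f (Fin.cons t y)) (p 0) (μ 0) := fun a => funext fun y => by
    simp only [normIn_eq_eLpNorm μ 0 hp, Fin.update_cons_zero]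
  simp only [iteratedNorm_cons]
  refine iSup_congr fun y =>
    (iSup_congr fun a => iteratedNorm_map_succ_apply_cons μ _ _ a y).trans ?_
  simp only [hfirst, iSup_const]

end Succ

theorem mixedNorm_holder_general {n m : ℕ} {X : Fin n → Type*}
    [∀ j, MeasurableSpace (X j)] (μ : ∀ j, Measure (X j)) [∀ j, SigmaFinite (μ j)]
    (p : Fin m → Fin n → ℝ≥0∞)
    (hsum : ∀ j : Fin n, ∑ i : Fin m, (p i j)⁻¹ = 1)
    (f : Fin m → (∀ k, X k) → ℝ≥0∞) (hf : ∀ i, Measurable (f i)) :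
    ∫⁻ x, ∏ i : Fin m, f i x ∂(Measure.pi μ) ≤
      ∏ i : Fin m, mixedNorm μ (List.ofFn fun j => (j, p i j)) (f i) := by
  have hF : Measurable fun x => ∏ i, f i x := Finset.measurable_prod _ fun i _ => hf i
  induction n with
  | zero =>
    rw [Measure.pi_of_empty μ, lintegral_dirac' _ hF]
    exact Finset.prod_le_prod' fun i _ => le_iSup (f i) _
  | succ n ih =>
    rw [lintegral_pi_fin_succ μ hF]
    rcases isEmpty_or_nonempty (X 0) with hX | hX
    · simp only [lintegral_of_isEmpty, lintegral_zero, zero_le]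
    have hcons : ∀ i y, Measurable fun t => f i (Fin.cons t y) := fun i y =>
      (hf i).comp (measurable_fin_cons.comp (measurable_id.prodMk measurable_const))
    have hslice : ∀ i, Measurable fun y => eLpNorm (fun t => f i (Fin.cons t y)) (p i 0) (μ 0) :=
      fun i => Measurable.eLpNorm_prod_right (g := fun y t => f i (Fin.cons t y))
        ((hf i).comp (measurable_fin_cons.comp measurable_swap)) _
    calc ∫⁻ y, ∫⁻ t, ∏ i, f i (Fin.cons t y) ∂μ 0 ∂Measure.pi (fun k => μ k.succ)
        ≤ ∫⁻ y, ∏ i, eLpNorm (fun t => f i (Fin.cons t y)) (p i 0) (μ 0)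
            ∂Measure.pi (fun k => μ k.succ) :=
          lintegral_mono fun y =>
            lintegral_prod_le_prod_eLpNorm (fun i _ => (hcons i y).aemeasurable) (hsum 0)
      _ ≤ _ := ih (fun k => μ k.succ) (fun i k => p i k.succ) (fun k => hsum k.succ) _ hslice
          (Finset.measurable_prod _ fun i _ => hslice i)
      _ = _ := Finset.prod_congr rfl fun i _ =>
          (mixedNorm_ofFn_succ μ (p i) (ENNReal.ne_zero_of_sum_inv_eq_one (hsum 0)
            (Finset.mem_univ i)) (f i)).symm

/-- Mixed-norm Hölder inequality (Benedek–Panzone): if for each variable `j` the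
exponents satisfy `Σᵢ 1/p_{i,j} = 1` (with `1/∞ = 0`), then
`∫ f₁ ⋯ f_m dμ ≤ ‖f₁‖_{P₁} ⋯ ‖f_m‖_{P_m}`, where each `Pᵢ` processes the variables
in the same order `x₁, …, xₙ`. -/
theorem mixedNorm_holder {n m : ℕ} {X : Fin n → Type*}
    [∀ j, MeasurableSpace (X j)] (μ : ∀ j, Measure (X j)) [∀ j, SigmaFinite (μ j)]
    (p : Fin m → Fin n → ℝ≥0∞) (hp : ∀ i j, 0 < p i j)
    (hsum : ∀ j : Fin n, ∑ i : Fin m, (p i j)⁻¹ = 1)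
    (f : Fin m → (∀ k, X k) → ℝ≥0∞) (hf : ∀ i, Measurable (f i)) :
    ∫⁻ x, ∏ i : Fin m, f i x ∂(Measure.pi μ) ≤
      ∏ i : Fin m, mixedNorm μ (List.ofFn fun j => (j, p i j)) (f i) :=
  mixedNorm_holder_general μ p hsum f hf
end
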